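/- Let G be a Borel probability measure on the unit sphere S = {z ∈ ℝ^N : |z| = 1}, let n ≥ 2 and 0 < ε ≤ 1 with (n−1)ε ≥ 2. Then G^{⊗n}{ (z¹,…,z^n) : z¹·z^l ≤ −ε for all 2 ≤ l ≤ n } ≤ (2 / ((n−1)ε)) · ( 1 + log( (n−1)ε / 2 ) ). -/

import Mathlib

/-!
Write `f u = G {z | ⟪u, z⟫ ≤ -ε}`. Conditioning on `z¹`, the probability is `∫ f ^ (n - 1) dG`,
which is at most `G {f > γ} + γ ^ (n - 1)`. If `k ε > 1`, then `G {f > γ} ≤ k (1 - γ)`: the cap of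
each point of `{f > γ}` misses mass less than `1 - γ`, so otherwise one can greedily choose `k + 1`
unit vectors with pairwise inner products `≤ -ε`, contradicting `0 ≤ ‖∑ uᵢ‖² ≤ (k + 1) (1 - k ε)`.
Finally take `k = ⌊1/ε⌋ + 1 ≤ 2/ε`, `M = (n - 1) ε / 2` and `γ = 1 - log M / (n - 1)`, so that
`γ ^ (n - 1) ≤ exp (-log M) = 1 / M`.
-/

open MeasureTheory Finset
open scoped RealInnerProductSpace ENNReal

section Measure

variable {α : Type*} [MeasurableSpace α]

theorem exists_list_pairwise_of_measure_compl_add_lt_one (μ : Measure α) [IsProbabilityMeasure μ]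
    (R : α → α → Prop) {A : Set α} {δ : ℝ≥0∞} (hA : ∀ u ∈ A, μ {z | R u z}ᶜ ≤ δ) {k : ℕ}
    (hk : μ Aᶜ + k * δ < 1) :
    ∃ l : List α, l.length = k + 1 ∧ (∀ u ∈ l, u ∈ A) ∧ l.Pairwise R := by
  suffices ∀ j ≤ k + 1, ∃ l : List α, l.length = j ∧ (∀ u ∈ l, u ∈ A) ∧ l.Pairwise R from
    this _ le_rfl
  classical
  intro j hj
  induction j with
  | zero => exact ⟨[], rfl, by simp, List.Pairwise.nil⟩
  | succ j ih =>
    obtain ⟨l, hlen, hlA, hlR⟩ := ih (by omega)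
    have hcard : (#l.toFinset : ℝ≥0∞) ≤ k := by
      exact_mod_cast (List.toFinset_card_le l).trans (by omega)
    have hbad : μ (Aᶜ ∪ ⋃ u ∈ l.toFinset, {z | R u z}ᶜ) < 1 := calc
      _ ≤ μ Aᶜ + ∑ u ∈ l.toFinset, μ {z | R u z}ᶜ :=
        (measure_union_le _ _).trans (add_le_add_right (measure_biUnion_finset_le _ _) _)
      _ ≤ μ Aᶜ + ∑ _u ∈ l.toFinset, δ := by
        gcongr with u hu
        exact hA u (hlA u (List.mem_toFinset.1 hu))
      _ ≤ μ Aᶜ + k * δ := by rw [sum_const, nsmul_eq_mul]; gcongr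
      _ < 1 := hk
    obtain ⟨z, hz⟩ : (Aᶜ ∪ ⋃ u ∈ l.toFinset, {z | R u z}ᶜ)ᶜ.Nonempty :=
      Set.nonempty_compl.2 fun h => by rw [h, measure_univ] at hbad; exact hbad.false
    simp only [Set.compl_union, compl_compl, Set.compl_iUnion, Set.mem_inter_iff,
      Set.mem_iInter, List.mem_toFinset, Set.mem_ofPred_eq] at hz
    refine ⟨l ++ [z], by simp [hlen], ?_, ?_⟩
    · simpa [or_imp, forall_and] using ⟨hlA, hz.1⟩
    · simpa [List.pairwise_append] using ⟨hlR, hz.2⟩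

theorem measure_pi_forall_rel_zero_succ_eq_lintegral (μ : Measure α) [SigmaFinite μ]
    {R : α → α → Prop} (hR : MeasurableSet {p : α × α | R p.1 p.2}) (m : ℕ) :
    Measure.pi (fun _ : Fin (m + 1) => μ) {z | ∀ j : Fin m, R (z 0) (z j.succ)} =
      ∫⁻ x, μ {y | R x y} ^ m ∂μ := by
  set s : Set (α × (Fin m → α)) := {p | ∀ j, R p.1 (p.2 j)}
  have hs : MeasurableSet s := by
    simp only [s, Set.ofPred_forall]
    exact MeasurableSet.iInter fun j =>
      hR.preimage (f := fun p : α × (Fin m → α) => (p.1, p.2 j)) (by fun_prop)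
  have hpre : {z : Fin (m + 1) → α | ∀ j : Fin m, R (z 0) (z j.succ)} =
      MeasurableEquiv.piFinSuccAbove (fun _ => α) 0 ⁻¹' s := by
    ext z
    simp [s, MeasurableEquiv.piFinSuccAbove, Fin.tail]
  rw [hpre, (measurePreserving_piFinSuccAbove (fun _ => μ) 0).measure_preimage
    hs.nullMeasurableSet, Measure.prod_apply hs]
  refine lintegral_congr fun x => ?_
  have : Prod.mk x ⁻¹' s = Set.univ.pi fun _ => {y | R x y} := by ext; simp [s]
  simp [this, Measure.pi_pi]

theorem lintegral_pow_le_measure_lt_add_pow (μ : Measure α) [IsProbabilityMeasure μ]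
    {f : α → ℝ≥0∞} (hf : Measurable f) (hf1 : ∀ x, f x ≤ 1) (γ : ℝ≥0∞) (m : ℕ) :
    ∫⁻ x, f x ^ m ∂μ ≤ μ {x | γ < f x} + γ ^ m := by
  have hB : MeasurableSet {x | γ < f x} := measurableSet_lt measurable_const hf
  calc ∫⁻ x, f x ^ m ∂μ ≤ ∫⁻ x, ({x | γ < f x}.indicator 1 x + γ ^ m) ∂μ := by
        refine lintegral_mono fun x => ?_
        by_cases hx : γ < f x
        · simpa [hx] using le_add_right (pow_le_one₀ zero_le (hf1 x))
        · simpa [hx] using pow_le_pow_left₀ zero_le (not_lt.1 hx) m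
    _ = μ {x | γ < f x} + γ ^ m := by
        rw [lintegral_add_right _ measurable_const, lintegral_indicator_one hB]
        simp

end Measure

section Gram

variable {E : Type*} [NormedAddCommGroup E] [InnerProductSpace ℝ E]

theorem card_sub_one_mul_le_one_of_inner_le_neg {ι : Type*} [Fintype ι] [Nonempty ι]
    {u : ι → E} (hu : ∀ i, ‖u i‖ = 1) {ε : ℝ} (hε : Pairwise fun i j => ⟪u i, u j⟫ ≤ -ε) :
    ((Fintype.card ι : ℝ) - 1) * ε ≤ 1 := by
  classical
  set c : ℝ := (Fintype.card ι : ℝ)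
  have hc : 0 < c := by simp [c, Fintype.card_pos]
  have hentry : ∀ i j, ⟪u i, u j⟫ ≤ -ε + if i = j then 1 + ε else 0 := by
    intro i j
    by_cases hij : i = j
    · simp [hij, hu]
    · simpa [hij] using hε hij
  have : 0 ≤ c * (c * -ε + (1 + ε)) := calc
    (0 : ℝ) ≤ ⟪∑ i, u i, ∑ j, u j⟫ := real_inner_self_nonneg
    _ = ∑ i, ∑ j, ⟪u i, u j⟫ := by simp_rw [sum_inner, inner_sum]
    _ ≤ ∑ i : ι, ∑ j : ι, (-ε + if i = j then 1 + ε else 0) := by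
      gcongr with i _ j _; exact hentry i j
    _ = c * (c * -ε + (1 + ε)) := by simp [sum_add_distrib, c]; ring
  nlinarith

end Gram

section Caps

variable {E : Type*} [NormedAddCommGroup E] [InnerProductSpace ℝ E] [MeasurableSpace E]
  [BorelSpace E] [SecondCountableTopology E]

theorem measurableSet_inner_le_neg (ε : ℝ) : MeasurableSet {p : E × E | ⟪p.1, p.2⟫ ≤ -ε} :=
  (isClosed_le (continuous_fst.inner continuous_snd) continuous_const).measurableSet

theorem measure_setOf_lt_measure_inner_le_neg_le (μ : Measure E) [IsProbabilityMeasure μ]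
    (hμ : μ (Metric.sphere 0 1)ᶜ = 0) {ε : ℝ} {k : ℕ} (hk : 1 < k * ε) (γ : ℝ≥0∞) :
    μ {u | γ < μ {z | ⟪u, z⟫ ≤ -ε}} ≤ k * (1 - γ) := by
  set B := {u | γ < μ {z | ⟪u, z⟫ ≤ -ε}}
  have hB : MeasurableSet B := measurableSet_lt measurable_const
    (measurable_measure_prodMk_left (measurableSet_inner_le_neg ε))
  by_contra! hlt
  have hA : ∀ u ∈ B ∩ Metric.sphere 0 1, μ {z | ⟪u, z⟫ ≤ -ε}ᶜ ≤ 1 - γ := fun u hu => by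
    rw [prob_compl_eq_one_sub (measurableSet_le (by fun_prop) (by fun_prop))]
    exact tsub_le_tsub_left hu.1.le 1
  have hk' : μ (B ∩ Metric.sphere 0 1)ᶜ + k * (1 - γ) < 1 := calc
    _ ≤ μ Bᶜ + k * (1 - γ) := by
      rw [Set.compl_inter]
      gcongr ?_ + _
      exact (measure_union_le _ _).trans (by rw [hμ, add_zero])
    _ < μ Bᶜ + μ B := ENNReal.add_lt_add_left (measure_ne_top _ _) hlt
    _ = 1 := by rw [prob_compl_eq_one_sub hB, tsub_add_cancel_of_le prob_le_one]
  obtain ⟨l, hlen, hlA, hlR⟩ := exists_list_pairwise_of_measure_compl_add_lt_one μ _ hA hk'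
  have : Nonempty (Fin l.length) := ⟨⟨0, by omega⟩⟩
  have hpair : Pairwise fun i j : Fin l.length => ⟪l.get i, l.get j⟫ ≤ -ε := fun i j hij => by
    rcases hij.lt_or_gt with h | h
    · exact List.pairwise_iff_get.1 hlR i j h
    · rw [real_inner_comm]
      exact List.pairwise_iff_get.1 hlR j i h
  have hunit : ∀ i, ‖l.get i‖ = 1 := fun i => by
    simpa using (hlA _ (List.get_mem l i)).2
  have := card_sub_one_mul_le_one_of_inner_le_neg hunit hpair
  simp only [Fintype.card_fin, hlen] at this
  push_cast at this
  linarith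

theorem measure_pi_forall_inner_le_neg_le (μ : Measure E) [IsProbabilityMeasure μ]
    (hμ : μ (Metric.sphere 0 1)ᶜ = 0) {ε : ℝ} {k : ℕ} (hk : 1 < k * ε) (γ : ℝ≥0∞) (m : ℕ) :
    Measure.pi (fun _ : Fin (m + 1) => μ) {z | ∀ j : Fin m, ⟪z 0, z j.succ⟫ ≤ -ε} ≤
      k * (1 - γ) + γ ^ m := by
  rw [measure_pi_forall_rel_zero_succ_eq_lintegral (R := fun u z : E => ⟪u, z⟫ ≤ -ε) μ
    (measurableSet_inner_le_neg ε)]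
  calc _ ≤ μ {u | γ < μ {z | ⟪u, z⟫ ≤ -ε}} + γ ^ m :=
        lintegral_pow_le_measure_lt_add_pow μ
          (measurable_measure_prodMk_left (measurableSet_inner_le_neg ε)) (fun _ => prob_le_one) γ m
    _ ≤ k * (1 - γ) + γ ^ m := by grw [measure_setOf_lt_measure_inner_le_neg_le μ hμ hk γ]

end Caps

theorem exists_nat_one_lt_mul_le_two {ε : ℝ} (hε : 0 < ε) (hε1 : ε ≤ 1) :
    ∃ k : ℕ, 1 < k * ε ∧ k * ε ≤ 2 := by
  refine ⟨⌊ε⁻¹⌋₊ + 1, ?_, ?_⟩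
  · rw [← inv_mul_cancel₀ hε.ne']
    gcongr
    exact_mod_cast Nat.lt_floor_add_one ε⁻¹
  · have := Nat.floor_le (inv_nonneg.2 hε.le)
    push_cast
    nlinarith [inv_mul_cancel₀ hε.ne']

theorem exists_mul_one_sub_add_pow_le {m : ℕ} {M c : ℝ} (hM : 1 ≤ M) (hMm : M ≤ m)
    (hc : c * M ≤ m) :
    ∃ γ : ℝ, 0 ≤ γ ∧ γ ≤ 1 ∧ c * (1 - γ) + γ ^ m ≤ (1 + Real.log M) / M := by
  have hm : (0 : ℝ) < m := by linarith
  have hlog0 : 0 ≤ Real.log M := Real.log_nonneg hM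
  have hlogm : Real.log M ≤ m := (Real.log_le_sub_one_of_pos (by linarith)).trans (by linarith)
  refine ⟨1 - Real.log M / m, ?_, ?_, ?_⟩
  · rwa [sub_nonneg, div_le_one hm]
  · linarith [div_nonneg hlog0 hm.le]
  have hpow : (1 - Real.log M / m) ^ m ≤ M⁻¹ := by
    simpa [Real.exp_neg, Real.exp_log (by linarith : 0 < M)] using
      Real.one_sub_div_pow_le_exp_neg hlogm
  have hlin : c * (1 - (1 - Real.log M / m)) ≤ Real.log M / M := by
    rw [sub_sub_cancel, le_div_iff₀ (by linarith)]
    calc c * (Real.log M / m) * M = c * M * (Real.log M / m) := by ring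
      _ ≤ m * (Real.log M / m) := by gcongr
      _ = Real.log M := by field_simp
  calc _ ≤ Real.log M / M + M⁻¹ := add_le_add hlin hpow
    _ = (1 + Real.log M) / M := by field_simp; ring

/-- Optimized bound: for `n ≥ 2`, `0 < ε ≤ 1` with `(n−1)ε ≥ 2`, the probability that `n`
i.i.d. samples from a probability measure `G` on the unit sphere satisfy `z¹·z^l ≤ −ε` for all
`2 ≤ l ≤ n` is at most `(2/((n−1)ε))·(1 + log((n−1)ε/2))`. -/
theorem all_overlaps_negative_le_log (N : ℕ)
    (G : Measure (EuclideanSpace ℝ (Fin N))) [IsProbabilityMeasure G]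
    (hG : G (Metric.sphere (0 : EuclideanSpace ℝ (Fin N)) 1)ᶜ = 0)
    (n : ℕ) (hn : 2 ≤ n) (ε : ℝ) (hε : 0 < ε) (hε1 : ε ≤ 1)
    (hnε : 2 ≤ ((n : ℝ) - 1) * ε) :
    ((Measure.pi fun _ : Fin n => G)
        {z : Fin n → EuclideanSpace ℝ (Fin N) |
          ∀ l : Fin n, l ≠ ⟨0, by omega⟩ → ⟪z ⟨0, by omega⟩, z l⟫ ≤ -ε}).toReal ≤
      (2 / (((n : ℝ) - 1) * ε)) * (1 + Real.log (((n : ℝ) - 1) * ε / 2)) := by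
  obtain ⟨m, rfl⟩ : ∃ m, n = m + 1 := ⟨n - 1, by omega⟩
  have hm : ((m + 1 : ℕ) : ℝ) - 1 = m := by push_cast; ring
  rw [hm] at hnε ⊢
  obtain ⟨k, hk1, hk2⟩ := exists_nat_one_lt_mul_le_two hε hε1
  obtain ⟨γ, hγ0, hγ1, hγ⟩ := exists_mul_one_sub_add_pow_le (m := m) (M := m * ε / 2) (c := k)
    (by linarith) (by nlinarith) (by nlinarith)
  have hevent : {z : Fin (m + 1) → EuclideanSpace ℝ (Fin N) |
      ∀ l : Fin (m + 1), l ≠ ⟨0, by omega⟩ → ⟪z ⟨0, by omega⟩, z l⟫ ≤ -ε} =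
      {z | ∀ j : Fin m, ⟪z 0, z j.succ⟫ ≤ -ε} := by
    ext z
    simp [Fin.forall_fin_succ]
  rw [hevent]
  refine (ENNReal.toReal_le_of_le_ofReal (by positivity) ?_).trans (hγ.trans_eq (by field_simp))
  calc _ ≤ k * (1 - ENNReal.ofReal γ) + ENNReal.ofReal γ ^ m :=
        measure_pi_forall_inner_le_neg_le G hG hk1 _ m
    _ = ENNReal.ofReal (k * (1 - γ) + γ ^ m) := by
        rw [ENNReal.ofReal_add (mul_nonneg k.cast_nonneg (sub_nonneg.2 hγ1)) (by positivity),
          ENNReal.ofReal_mul k.cast_nonneg, ENNReal.ofReal_sub _ hγ0, ENNReal.ofReal_one,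
          ENNReal.ofReal_natCast, ENNReal.ofReal_pow hγ0]
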